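/- Let d ≥ 1 and let (J_λ)_{λ > 0} be a family of functions J_λ : ℤ^d → ℝ, each satisfying J_λ(0) = 0, J_λ(−x) = J_λ(x) for all x, Σ_{x ∈ ℤ^d} |J_λ(x)| < ∞ and Σ_{x ∈ ℤ^d} J_λ(x) = 1, with (real-valued) Fourier transform Ĵ_λ(k) = Σ_{x ∈ ℤ^d} J_λ(x) e^{i k·x} for k ∈ [−π, π]^d. Assume: (1) there exist δ > 0, C > 0 and λ₀ > 0 such that 1 − Ĵ_λ(k) ≥ C |k|^{d−δ} for all 0 < λ ≤ λ₀ and all k ∈ [−π, π]^d \ {0}, where |k| is the Euclidean norm; (2) Σ_{x ∈ ℤ^d} J_λ(x)² → 0 as λ ↓ 0. Then ∫_{[−π,π]^d} Ĵ_λ(k)² / (1 − Ĵ_λ(k)) dk/(2π)^d → 0 as λ ↓ 0. -/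

import Mathlib

open Real Set Filter Topology MeasureTheory

noncomputable section

/-- The (real-valued) Fourier transform `Ĵ(k) = Σ_x J(x) e^{i k·x}` of an even,
absolutely summable `J : ℤ^d → ℝ`; by evenness it equals `Σ_x J(x) cos(k·x)`. -/
noncomputable def jhat (d : ℕ) (J : (Fin d → ℤ) → ℝ) (k : Fin d → ℝ) : ℝ :=
  ∑' x : Fin d → ℤ, J x * Real.cos (∑ i, k i * (x i : ℝ))

/-- The Brillouin zone `[-π, π]^d`. -/
def brillouin (d : ℕ) : Set (Fin d → ℝ) :=
  Icc (fun _ => -π) (fun _ => π)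

/-- The infrared integral `I(J) = ∫_{[-π,π]^d} Ĵ(k)²/(1-Ĵ(k)) dk/(2π)^d`. -/
noncomputable def irIntegral (d : ℕ) (J : (Fin d → ℤ) → ℝ) : ℝ :=
  (1 / (2 * π) ^ d) * ∫ k in brillouin d, jhat d J k ^ 2 / (1 - jhat d J k)

/-!
Split the Brillouin zone at a small ball `B_r`. With `u = 1 - Ĵ ≥ w := C' |k|^e`, one has
`Ĵ²/u = 1/u - 1 - Ĵ ≤ 1/w + Ĵ²/2` on `B_r` and `Ĵ²/u ≤ Ĵ²/(C' r^e)` off it. Since `1/w` is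
integrable for `e < d` and Parseval gives `∫ Ĵ² = (2π)^d Σ J²`, this yields
`I(J_λ) ≤ (2π)^{-d} ∫_{B_r} 1/w + (1/2 + 1/(C' r^e)) Σ J_λ²`:
first choose `r` to make the integral small, then let `λ ↓ 0`.
-/

lemma integral_exp_int_mul_I (m : ℤ) :
    ∫ t in Icc (-π) π, Complex.exp (t * m * Complex.I) =
      if m = 0 then ((2 * π : ℝ) : ℂ) else 0 := by
  rw [integral_Icc_eq_integral_Ioc, ← intervalIntegral.integral_of_le (by linarith [pi_pos])]
  split_ifs with hm
  · simp [hm, two_mul]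
  · have hc : (m : ℂ) * Complex.I ≠ 0 := by simp [hm]
    simp_rw [mul_assoc, mul_comm _ ((m : ℂ) * Complex.I)]
    rw [integral_exp_mul_complex hc]
    have hsin : Complex.sin (m * π) = 0 := by exact_mod_cast Complex.sin_int_mul_pi m
    rw [div_eq_zero_iff, sub_eq_zero]
    left
    push_cast
    rw [show (m : ℂ) * Complex.I * π = (m * π) * Complex.I by ring,
      show (m : ℂ) * Complex.I * -π = -(m * π) * Complex.I by ring, Complex.exp_mul_I,
      Complex.exp_mul_I, Complex.cos_neg, Complex.sin_neg, hsin, neg_zero]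

lemma brillouin_eq_pi (d : ℕ) : brillouin d = univ.pi fun _ => Icc (-π) π :=
  (pi_univ_Icc _ _).symm

instance isFiniteMeasure_restrict_brillouin (d : ℕ) :
    IsFiniteMeasure (volume.restrict (brillouin d)) :=
  isFiniteMeasure_restrict.2 isCompact_Icc.measure_lt_top.ne

lemma integral_cos_brillouin {d : ℕ} (z : Fin d → ℤ) :
    ∫ k in brillouin d, cos (∑ i, k i * z i) = if z = 0 then (2 * π) ^ d else 0 := by
  have hprod : ∀ k : Fin d → ℝ, Complex.exp ((∑ i, k i * z i : ℝ) * Complex.I) =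
      ∏ i, Complex.exp (k i * z i * Complex.I) := by
    intro k
    push_cast
    rw [Finset.sum_mul, Complex.exp_sum]
  have hexp : ∫ k in brillouin d, Complex.exp ((∑ i, k i * z i : ℝ) * Complex.I) =
      ((if z = 0 then (2 * π) ^ d else 0 : ℝ) : ℂ) := by
    rw [brillouin_eq_pi, volume_pi, Measure.restrict_pi_pi]
    simp_rw [hprod]
    rw [integral_fintype_prod_eq_prod (fun i (t : ℝ) => Complex.exp (t * z i * Complex.I))]
    simp_rw [integral_exp_int_mul_I]
    split_ifs with hz
    · simp [hz]
    · obtain ⟨i, hi⟩ := Function.ne_iff.1 hz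
      exact Finset.prod_eq_zero (Finset.mem_univ i) (if_neg hi)
  have hint : Integrable (fun k : Fin d → ℝ => Complex.exp ((∑ i, k i * z i : ℝ) * Complex.I))
      (volume.restrict (brillouin d)) :=
    (Continuous.continuousOn (by fun_prop)).integrableOn_compact isCompact_Icc
  have := integral_re hint
  simp only [RCLike.re_to_complex, Complex.exp_ofReal_mul_I_re, hexp, Complex.ofReal_re] at this
  exact this

lemma integral_cos_mul_cos_brillouin {d : ℕ} (x y : Fin d → ℤ) :
    ∫ k in brillouin d, cos (∑ i, k i * x i) * cos (∑ i, k i * y i) =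
      (2 * π) ^ d / 2 * ((if x = y then 1 else 0) + (if x = -y then 1 else 0)) := by
  have hprod : ∀ k : Fin d → ℝ, cos (∑ i, k i * x i) * cos (∑ i, k i * y i) =
      (cos (∑ i, k i * ((x - y : Fin d → ℤ) i : ℝ)) +
        cos (∑ i, k i * ((x + y : Fin d → ℤ) i : ℝ))) / 2 := by
    intro k
    simp only [Pi.sub_apply, Pi.add_apply, Int.cast_sub, Int.cast_add, mul_sub, mul_add,
      Finset.sum_sub_distrib, Finset.sum_add_distrib, cos_sub, cos_add]
    ring
  have hint : ∀ z : Fin d → ℤ, IntegrableOn (fun k : Fin d → ℝ => cos (∑ i, k i * z i))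
      (brillouin d) :=
    fun z => (Continuous.continuousOn (by fun_prop)).integrableOn_compact isCompact_Icc
  simp_rw [hprod]
  rw [integral_div, integral_add (hint _) (hint _), integral_cos_brillouin,
    integral_cos_brillouin]
  simp only [sub_eq_zero, add_eq_zero_iff_eq_neg]
  split_ifs <;> ring

lemma abs_mul_cos_le (a θ : ℝ) : |a * cos θ| ≤ |a| := by
  rw [abs_mul]
  exact mul_le_of_le_one_right (abs_nonneg a) (abs_cos_le_one θ)

section

variable {d : ℕ} {J : (Fin d → ℤ) → ℝ}

lemma abs_jhat_le (hs : Summable fun x => |J x|) (k : Fin d → ℝ) :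
    |jhat d J k| ≤ ∑' x, |J x| := by
  have hsum : Summable fun x => ‖J x * cos (∑ i, k i * x i)‖ :=
    hs.of_nonneg_of_le (fun _ => norm_nonneg _) fun x => abs_mul_cos_le _ _
  exact (norm_tsum_le_tsum_norm hsum).trans (hsum.tsum_le_tsum (fun x => abs_mul_cos_le _ _) hs)

lemma continuous_jhat (hs : Summable fun x => |J x|) : Continuous (jhat d J) :=
  continuous_tsum (fun x => by fun_prop) hs fun x k => abs_mul_cos_le _ _

lemma integral_tsum_of_norm_le {α ι E : Type*} [MeasurableSpace α] {μ : Measure α}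
    [IsFiniteMeasure μ] [Countable ι] [NormedAddCommGroup E] [NormedSpace ℝ E]
    {F : ι → α → E} {b : ι → ℝ} (hF : ∀ i, AEStronglyMeasurable (F i) μ) (hb : Summable b)
    (hFb : ∀ i a, ‖F i a‖ ≤ b i) :
    ∫ a, ∑' i, F i a ∂μ = ∑' i, ∫ a, F i a ∂μ := by
  refine (integral_tsum_of_summable_integral_norm
    (fun i => Integrable.of_bound (hF i) (b i) (ae_of_all _ (hFb i))) ?_).symm
  refine (hb.mul_right (μ.real univ)).of_norm_bounded fun i => ?_
  exact (norm_integral_le_of_norm_le_const (ae_of_all _ fun a => by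
    simpa only [norm_norm] using hFb i a))

lemma integral_jhat_mul_cos (hs : Summable fun x => |J x|) (he : ∀ x, J (-x) = J x)
    (x : Fin d → ℤ) :
    ∫ k in brillouin d, jhat d J k * cos (∑ i, k i * x i) = (2 * π) ^ d * J x := by
  have hterm : ∀ y,
      J y * ((2 * π) ^ d / 2 * ((if y = x then 1 else 0) + (if y = -x then 1 else 0))) =
        (if y = x then (2 * π) ^ d / 2 * J x else 0) +
          (if y = -x then (2 * π) ^ d / 2 * J x else 0) := by
    intro y
    split_ifs <;> subst_vars <;> (try rw [he]) <;> ring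
  simp_rw [jhat, ← tsum_mul_right, mul_assoc]
  rw [integral_tsum_of_norm_le (fun y => (Continuous.aestronglyMeasurable (by fun_prop))) hs
    fun y k => by rw [← mul_assoc]; exact (abs_mul_cos_le _ _).trans (abs_mul_cos_le _ _)]
  simp_rw [integral_const_mul, integral_cos_mul_cos_brillouin, hterm]
  rw [((hasSum_ite_eq x _).add (hasSum_ite_eq (-x) _)).tsum_eq]
  ring

lemma integral_jhat_sq (hs : Summable fun x => |J x|) (he : ∀ x, J (-x) = J x) :
    ∫ k in brillouin d, jhat d J k ^ 2 = (2 * π) ^ d * ∑' x, J x ^ 2 := by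
  have hbound : ∀ x k, ‖J x * cos (∑ i, k i * x i) * jhat d J k‖ ≤ |J x| * ∑' y, |J y| := by
    intro x k
    rw [norm_mul]
    exact mul_le_mul (abs_mul_cos_le _ _) (abs_jhat_le hs k) (norm_nonneg _) (abs_nonneg _)
  have hcont : Continuous (jhat d J) := continuous_jhat hs
  have hexpand : ∀ k, jhat d J k ^ 2 = ∑' x, J x * cos (∑ i, k i * x i) * jhat d J k :=
    fun k => (sq _).trans tsum_mul_right.symm
  simp_rw [hexpand]
  rw [integral_tsum_of_norm_le (fun y => (Continuous.aestronglyMeasurable (by fun_prop)))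
    (hs.mul_right _) hbound]
  simp_rw [mul_assoc, integral_const_mul, mul_comm (cos _), integral_jhat_mul_cos hs he,
    ← tsum_mul_left]
  congr 1 with x
  ring

lemma sq_div_one_sub_le_inv_add {g w : ℝ} (hw : 0 < w) (hwg : w ≤ 1 - g) :
    g ^ 2 / (1 - g) ≤ w⁻¹ + g ^ 2 / 2 := by
  have hu : 0 < 1 - g := hw.trans_le hwg
  have hsplit : g ^ 2 / (1 - g) = (1 - g)⁻¹ + (-1 - g) := by
    field_simp
    ring
  rw [hsplit]
  have := inv_anti₀ hw hwg
  nlinarith [sq_nonneg (g + 1)]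

lemma sq_div_one_sub_le_mul_sq {g w M : ℝ} (hw : 0 < w) (hwg : w ≤ 1 - g) (hM : w⁻¹ ≤ M) :
    g ^ 2 / (1 - g) ≤ M * g ^ 2 :=
  calc g ^ 2 / (1 - g) ≤ g ^ 2 / w := div_le_div_of_nonneg_left (sq_nonneg _) hw hwg
    _ = w⁻¹ * g ^ 2 := div_eq_inv_mul _ _
    _ ≤ M * g ^ 2 := mul_le_mul_of_nonneg_right hM (sq_nonneg _)

lemma ae_restrict_brillouin_of_ne_zero (hd : 1 ≤ d) {p : (Fin d → ℝ) → Prop}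
    (hp : ∀ k ∈ brillouin d, k ≠ 0 → p k) : ∀ᵐ k ∂volume.restrict (brillouin d), p k := by
  have : Nonempty (Fin d) := ⟨⟨0, hd⟩⟩
  filter_upwards [ae_restrict_mem measurableSet_Icc, ae_restrict_of_ae (Measure.ae_ne _ 0)]
    with k hk hk0 using hp k hk hk0

lemma irIntegral_nonneg (hd : 1 ≤ d) {w : (Fin d → ℝ) → ℝ} (hw0 : ∀ k ≠ 0, 0 < w k)
    (hw : ∀ k ∈ brillouin d, k ≠ 0 → w k ≤ 1 - jhat d J k) : 0 ≤ irIntegral d J := by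
  refine mul_nonneg (by positivity) (integral_nonneg_of_ae ?_)
  exact ae_restrict_brillouin_of_ne_zero hd fun k hk hk0 =>
    div_nonneg (sq_nonneg _) ((hw0 k hk0).le.trans (hw k hk hk0))

lemma irIntegral_le (hd : 1 ≤ d) (hs : Summable fun x => |J x|) (he : ∀ x, J (-x) = J x)
    {w : (Fin d → ℝ) → ℝ} (hw0 : ∀ k ≠ 0, 0 < w k)
    (hw : ∀ k ∈ brillouin d, k ≠ 0 → w k ≤ 1 - jhat d J k)
    (hwi : IntegrableOn (fun k => (w k)⁻¹) (brillouin d)) {S : Set (Fin d → ℝ)}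
    (hS : MeasurableSet S) {M : ℝ} (hM0 : 0 ≤ M) (hM : ∀ k ∉ S, k ≠ 0 → (w k)⁻¹ ≤ M) :
    irIntegral d J ≤ 1 / (2 * π) ^ d * (∫ k in S ∩ brillouin d, (w k)⁻¹) +
      (1 / 2 + M) * ∑' x, J x ^ 2 := by
  set g := jhat d J
  have hg2 : IntegrableOn (fun k => g k ^ 2) (brillouin d) :=
    ((continuous_jhat hs).pow 2).continuousOn.integrableOn_compact isCompact_Icc
  have hpoint : ∀ k ∈ brillouin d, k ≠ 0 →
      g k ^ 2 / (1 - g k) ≤ S.indicator (fun k => (w k)⁻¹) k + (1 / 2 + M) * g k ^ 2 := by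
    intro k hk hk0
    by_cases hkS : k ∈ S
    · rw [indicator_of_mem hkS]
      nlinarith [sq_div_one_sub_le_inv_add (hw0 k hk0) (hw k hk hk0), sq_nonneg (g k)]
    · rw [indicator_of_notMem hkS, zero_add]
      nlinarith [sq_div_one_sub_le_mul_sq (hw0 k hk0) (hw k hk hk0) (hM k hkS hk0),
        sq_nonneg (g k)]
  have hintegral : ∫ k in brillouin d, g k ^ 2 / (1 - g k) ≤
      (∫ k in S ∩ brillouin d, (w k)⁻¹) + (1 / 2 + M) * ((2 * π) ^ d * ∑' x, J x ^ 2) := by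
    calc ∫ k in brillouin d, g k ^ 2 / (1 - g k)
        ≤ ∫ k in brillouin d, S.indicator (fun k => (w k)⁻¹) k + (1 / 2 + M) * g k ^ 2 := by
          refine integral_mono_of_nonneg ?_ ((hwi.indicator hS).add (hg2.const_mul _))
            (ae_restrict_brillouin_of_ne_zero hd hpoint)
          exact ae_restrict_brillouin_of_ne_zero hd fun k hk hk0 =>
            div_nonneg (sq_nonneg _) ((hw0 k hk0).le.trans (hw k hk hk0))
      _ = _ := by
          rw [integral_add (hwi.indicator hS) (hg2.const_mul _), integral_indicator hS,
            Measure.restrict_restrict hS, integral_const_mul, integral_jhat_sq hs he]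
  have hpi : 0 < (2 * π) ^ d := by positivity
  rw [irIntegral]
  calc 1 / (2 * π) ^ d * ∫ k in brillouin d, g k ^ 2 / (1 - g k)
      ≤ 1 / (2 * π) ^ d * ((∫ k in S ∩ brillouin d, (w k)⁻¹) +
          (1 / 2 + M) * ((2 * π) ^ d * ∑' x, J x ^ 2)) := by gcongr
    _ = _ := by field_simp

lemma norm_le_sqrt_sum_sq (k : Fin d → ℝ) : ‖k‖ ≤ √(∑ i, k i ^ 2) := by
  refine (pi_norm_le_iff_of_nonneg (sqrt_nonneg _)).2 fun i => ?_
  rw [norm_eq_abs, ← sqrt_sq_eq_abs]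
  exact sqrt_le_sqrt (Finset.single_le_sum (fun j _ => sq_nonneg (k j)) (Finset.mem_univ i))

lemma sqrt_sum_sq_pos {k : Fin d → ℝ} (hk : k ≠ 0) : 0 < √(∑ i, k i ^ 2) :=
  (norm_pos_iff.2 hk).trans_le (norm_le_sqrt_sum_sq k)

lemma sqrt_sum_sq_le_of_mem_brillouin {k : Fin d → ℝ} (hk : k ∈ brillouin d) :
    √(∑ i, k i ^ 2) ≤ √d * π := by
  have hsum : ∑ i, k i ^ 2 ≤ d * π ^ 2 := by
    simpa using Finset.sum_le_sum fun i (_ : i ∈ Finset.univ) => sq_le_sq' (hk.1 i) (hk.2 i)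
  calc √(∑ i, k i ^ 2) ≤ √(d * π ^ 2) := sqrt_le_sqrt hsum
    _ = √d * π := by rw [sqrt_mul (Nat.cast_nonneg d), sqrt_sq pi_pos.le]

lemma integrableOn_inv_mul_sqrt_sum_sq_rpow (hd : 1 ≤ d) {e : ℝ} (he : 0 < e) (hed : e < d)
    (c : ℝ) : IntegrableOn (fun k : Fin d → ℝ => (c * √(∑ i, k i ^ 2) ^ e)⁻¹) (brillouin d) := by
  have hloc : LocallyIntegrable (fun k : Fin d → ℝ => √(∑ i, k i ^ 2) ^ (-e)) := by
    refine locallyIntegrable_of_norm_le_rpow (C := 1) (α := e) (by simpa using hd)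
      (by simpa using hed) (ae_of_all _ fun k => ?_)
      (Measurable.aestronglyMeasurable (by fun_prop))
    rw [one_mul, norm_of_nonneg (rpow_nonneg (sqrt_nonneg _) _)]
    rcases eq_or_ne k 0 with rfl | hk
    · simp [zero_rpow (neg_ne_zero.2 he.ne')]
    · exact rpow_le_rpow_of_nonpos (norm_pos_iff.2 hk) (norm_le_sqrt_sum_sq k)
        (neg_nonpos.2 he.le)
  refine IntegrableOn.congr_fun ((hloc.integrableOn_isCompact isCompact_Icc).const_mul c⁻¹)
    (fun k _ => ?_) measurableSet_Icc
  simp only [mul_inv, rpow_neg (sqrt_nonneg _)]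

lemma tendsto_setIntegral_ball_inter (hd : 1 ≤ d) {f : (Fin d → ℝ) → ℝ} {s : Set (Fin d → ℝ)}
    (hf : IntegrableOn f s) :
    Tendsto (fun r => ∫ k in Metric.ball 0 r ∩ s, f k) (𝓝[>] 0) (𝓝 0) := by
  simp_rw [← Measure.restrict_restrict measurableSet_ball]
  refine hf.tendsto_setIntegral_nhds_zero ?_
  have hvol : Tendsto (fun r : ℝ => ENNReal.ofReal ((2 * r) ^ d)) (𝓝[>] 0) (𝓝 0) := by
    rw [← ENNReal.ofReal_zero]
    refine ENNReal.tendsto_ofReal (tendsto_nhdsWithin_of_tendsto_nhds ?_)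
    have hcont : Continuous fun r : ℝ => (2 * r) ^ d := by fun_prop
    simpa [zero_pow (Nat.one_le_iff_ne_zero.1 hd)] using hcont.tendsto 0
  refine tendsto_of_tendsto_of_tendsto_of_le_of_le' tendsto_const_nhds hvol
    (Eventually.of_forall fun r => zero_le) ?_
  filter_upwards [self_mem_nhdsWithin] with r (hr : 0 < r)
  calc volume.restrict s (Metric.ball 0 r) ≤ volume (Metric.ball (0 : Fin d → ℝ) r) :=
        Measure.restrict_apply_le _ _
    _ = ENNReal.ofReal ((2 * r) ^ d) := by simp [Real.volume_pi_ball _ hr]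

lemma tendsto_zero_of_forall_le_add_mul {ι : Type*} {l : Filter ι} {f s : ι → ℝ}
    (hs : Tendsto s l (𝓝 0)) (hf0 : ∀ᶠ i in l, 0 ≤ f i)
    (hf : ∀ ε > 0, ∃ c, ∀ᶠ i in l, f i ≤ ε + c * s i) : Tendsto f l (𝓝 0) := by
  refine tendsto_order.2 ⟨fun a ha => hf0.mono fun i hi => ha.trans_le hi, fun a ha => ?_⟩
  obtain ⟨c, hc⟩ := hf (a / 2) (half_pos ha)
  have hcs : ∀ᶠ i in l, c * s i < a / 2 :=
    (by simpa using hs.const_mul c : Tendsto (fun i => c * s i) l (𝓝 0)).eventually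
      (gt_mem_nhds (half_pos ha))
  filter_upwards [hc, hcs] with i hi hci
  linarith

lemma rpow_sub_mul_rpow_le {t R a e : ℝ} (ht : 0 < t) (htR : t ≤ R) (hae : a ≤ e) :
    R ^ (a - e) * t ^ e ≤ t ^ a := by
  calc R ^ (a - e) * t ^ e ≤ t ^ (a - e) * t ^ e :=
        mul_le_mul_of_nonneg_right (rpow_le_rpow_of_nonpos ht htR (by linarith))
          (rpow_nonneg ht.le _)
    _ = t ^ a := by rw [← rpow_add ht, sub_add_cancel]

lemma mul_rpow_le_of_mem_brillouin {C a e : ℝ} (hC : 0 ≤ C) (hae : a ≤ e) {k : Fin d → ℝ}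
    (hk : k ∈ brillouin d) (hk0 : k ≠ 0) :
    C * (√d * π) ^ (a - e) * √(∑ i, k i ^ 2) ^ e ≤ C * √(∑ i, k i ^ 2) ^ a := by
  rw [mul_assoc]
  exact mul_le_mul_of_nonneg_left (rpow_sub_mul_rpow_le (sqrt_sum_sq_pos hk0)
    (sqrt_sum_sq_le_of_mem_brillouin hk) hae) hC

lemma inv_mul_rpow_le_of_notMem_ball {c e r : ℝ} (hc : 0 < c) (he : 0 ≤ e) (hr : 0 < r)
    {k : Fin d → ℝ} (hk : k ∉ Metric.ball 0 r) :
    (c * √(∑ i, k i ^ 2) ^ e)⁻¹ ≤ (c * r ^ e)⁻¹ := by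
  have hrk : r ≤ √(∑ i, k i ^ 2) := (not_lt.1 (by simpa using hk)).trans (norm_le_sqrt_sum_sq k)
  exact inv_anti₀ (by positivity) (by gcongr)

end

theorem ir_integral_tendsto_zero_general (d : ℕ) (hd : 1 ≤ d) (J : ℝ → (Fin d → ℤ) → ℝ)
    (heven : ∀ lam : ℝ, 0 < lam → ∀ x, J lam (-x) = J lam x)
    (hsumm : ∀ lam : ℝ, 0 < lam → Summable fun x => |J lam x|)
    (δ C lam0 : ℝ) (hδ : 0 < δ) (hC : 0 < C) (hlam0 : 0 < lam0)
    -- (1) the infrared lower bound `1 - Ĵ_λ(k) ≥ C |k|^{d-δ}`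
    (hIR : ∀ lam : ℝ, 0 < lam → lam ≤ lam0 → ∀ k ∈ brillouin d, k ≠ 0 →
      C * Real.sqrt (∑ i, k i ^ 2) ^ ((d : ℝ) - δ) ≤ 1 - jhat d (J lam) k)
    -- (2) the ℓ² norm of `J_λ` vanishes as `λ ↓ 0`
    (hL2 : Tendsto (fun lam => ∑' x : Fin d → ℤ, J lam x ^ 2) (𝓝[>] (0 : ℝ)) (𝓝 0)) :
    Tendsto (fun lam => irIntegral d (J lam)) (𝓝[>] (0 : ℝ)) (𝓝 0) := by
  -- On the bounded zone the infrared bound survives raising the exponent to some `e ∈ (0, d)`.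
  set e : ℝ := max ((d : ℝ) - δ) (d / 2)
  have he : 0 < e := lt_max_of_lt_right (by positivity)
  have hed : e < d := max_lt (by linarith) (by linarith [(Nat.one_le_cast.2 hd : (1 : ℝ) ≤ d)])
  set C' := C * (√d * π) ^ ((d : ℝ) - δ - e)
  have hC' : 0 < C' := by positivity
  set w : (Fin d → ℝ) → ℝ := fun k => C' * √(∑ i, k i ^ 2) ^ e
  have hw0 : ∀ k ≠ 0, 0 < w k := fun k hk => mul_pos hC' (rpow_pos_of_pos (sqrt_sum_sq_pos hk) e)
  have hw : ∀ lam ∈ Ioc 0 lam0, ∀ k ∈ brillouin d, k ≠ 0 → w k ≤ 1 - jhat d (J lam) k :=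
    fun lam hlam k hk hk0 => (mul_rpow_le_of_mem_brillouin hC.le (le_max_left _ _) hk hk0).trans
      (hIR lam hlam.1 hlam.2 k hk hk0)
  have hwi := integrableOn_inv_mul_sqrt_sum_sq_rpow hd he hed C'
  have hlam : ∀ᶠ lam in 𝓝[>] (0 : ℝ), lam ∈ Ioc 0 lam0 := Ioc_mem_nhdsGT hlam0
  refine tendsto_zero_of_forall_le_add_mul hL2
    (hlam.mono fun lam hl => irIntegral_nonneg hd hw0 (hw lam hl)) fun ε hε => ?_
  obtain ⟨r, hr, hrε⟩ : ∃ r > 0,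
      1 / (2 * π) ^ d * ∫ k in Metric.ball 0 r ∩ brillouin d, (w k)⁻¹ < ε := by
    have := (tendsto_setIntegral_ball_inter hd hwi).const_mul (1 / (2 * π) ^ d)
    rw [mul_zero] at this
    exact ((this.eventually (gt_mem_nhds hε)).and self_mem_nhdsWithin).exists.imp
      fun r h => ⟨h.2, h.1⟩
  refine ⟨1 / 2 + (C' * r ^ e)⁻¹, hlam.mono fun lam hl => ?_⟩
  linarith [irIntegral_le hd (hsumm lam hl.1) (heven lam hl.1) hw0 (hw lam hl) hwi
    measurableSet_ball (by positivity) fun k hk _ => inv_mul_rpow_le_of_notMem_ball hC' he.le hr hk]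

/-- Smallness of the infrared integral for asymptotically spread-out interactions
(Proposition 4.7). -/
theorem ir_integral_tendsto_zero (d : ℕ) (hd : 1 ≤ d) (J : ℝ → (Fin d → ℤ) → ℝ)
    (hzero : ∀ lam : ℝ, 0 < lam → J lam 0 = 0)
    (heven : ∀ lam : ℝ, 0 < lam → ∀ x, J lam (-x) = J lam x)
    (hsumm : ∀ lam : ℝ, 0 < lam → Summable fun x => |J lam x|)
    (hnorm : ∀ lam : ℝ, 0 < lam → ∑' x, J lam x = 1)
    (δ C lam0 : ℝ) (hδ : 0 < δ) (hC : 0 < C) (hlam0 : 0 < lam0)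
    -- (1) the infrared lower bound `1 - Ĵ_λ(k) ≥ C |k|^{d-δ}`
    (hIR : ∀ lam : ℝ, 0 < lam → lam ≤ lam0 → ∀ k ∈ brillouin d, k ≠ 0 →
      C * Real.sqrt (∑ i, k i ^ 2) ^ ((d : ℝ) - δ) ≤ 1 - jhat d (J lam) k)
    -- (2) the ℓ² norm of `J_λ` vanishes as `λ ↓ 0`
    (hL2 : Tendsto (fun lam => ∑' x : Fin d → ℤ, J lam x ^ 2) (𝓝[>] (0 : ℝ)) (𝓝 0)) :
    Tendsto (fun lam => irIntegral d (J lam)) (𝓝[>] (0 : ℝ)) (𝓝 0) :=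
  ir_integral_tendsto_zero_general d hd J heven hsumm δ C lam0 hδ hC hlam0 hIR hL2
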